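/- arXiv:1705.00101 — 2 statements merged into one kernel-verified Lean document; each statement's English description precedes it below -/
import Mathlib

section
/- Let (Ω, F, P) be a probability space satisfying the hypotheses below, with p ≥ 1 fixed. Then the family { (t(x) − t(y)) / |x − y| } indexed by pairs x ≠ y in ℤ^d is tight: for every ε > 0 there exists K' < ∞ such that P( |t(x) − t(y)| > K' · |x − y| ) ≤ ε for all x ≠ y in ℤ^d. (This is the tightness conclusion of Theorem 1.2, stated with all properties of the contact process hitting times that the proof uses carried as explicit hypotheses.) -/
open MeasureTheory Filter Finset

/-- The 1-norm of a point of `ℤ^d`. -/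
def onorm {d : ℕ} (x : Fin d → ℤ) : ℕ := ∑ i, (x i).natAbs

lemma aux_sum4 {p a b c e : ℝ} (hp : 1 ≤ p) (ha : 0 ≤ a) (hb : 0 ≤ b) (hc : 0 ≤ c) (he : 0 ≤ e) :
    (a + b + c + e) ^ p ≤ 4 ^ p * (a ^ p + b ^ p + c ^ p + e ^ p) := by
  have hp0 : (0:ℝ) ≤ p := le_trans zero_le_one hp
  set m := max (max a b) (max c e) with hm
  have hma : a ≤ m := le_trans (le_max_left a b) (le_max_left _ _)
  have hmb : b ≤ m := le_trans (le_max_right a b) (le_max_left _ _)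
  have hmc : c ≤ m := le_trans (le_max_left c e) (le_max_right _ _)
  have hme : e ≤ m := le_trans (le_max_right c e) (le_max_right _ _)
  have hm0 : 0 ≤ m := le_trans ha hma
  have hs : a + b + c + e ≤ 4 * m := by linarith
  have h1 : (a + b + c + e) ^ p ≤ (4 * m) ^ p :=
    Real.rpow_le_rpow (by linarith) hs hp0
  have h2 : (4 * m : ℝ) ^ p = 4 ^ p * m ^ p := Real.mul_rpow (by norm_num) hm0
  have hcases : m = a ∨ m = b ∨ m = c ∨ m = e := by
    rcases max_choice (max a b) (max c e) with h | h
    · rcases max_choice a b with h' | h' <;> rw [hm, h, h'] <;> tauto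
    · rcases max_choice c e with h' | h' <;> rw [hm, h, h'] <;> tauto
  have h3 : m ^ p ≤ a ^ p + b ^ p + c ^ p + e ^ p := by
    have pa := Real.rpow_nonneg ha p
    have pb := Real.rpow_nonneg hb p
    have pc := Real.rpow_nonneg hc p
    have pe := Real.rpow_nonneg he p
    rcases hcases with h | h | h | h <;> rw [h] <;> linarith
  calc (a + b + c + e) ^ p ≤ 4 ^ p * m ^ p := by rw [← h2]; exact h1
    _ ≤ 4 ^ p * (a ^ p + b ^ p + c ^ p + e ^ p) := by
        have : (0:ℝ) ≤ (4:ℝ) ^ p := Real.rpow_nonneg (by norm_num) p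
        nlinarith

lemma onorm_neg' {d : ℕ} (x : Fin d → ℤ) : onorm (-x) = onorm x := by
  unfold onorm; simp

lemma onorm_pos' {d : ℕ} {x : Fin d → ℤ} (hx : x ≠ 0) : 1 ≤ onorm x := by
  by_contra h
  push_neg at h
  have h0 : onorm x = 0 := by omega
  apply hx
  funext i
  have : (x i).natAbs = 0 := by
    have := Finset.sum_eq_zero_iff.mp h0 i (Finset.mem_univ i)
    exact this
  simpa [Int.natAbs_eq_zero] using this

/-- Theorem 1.2 (Tightness), tightness conclusion: for every `ε > 0` there is
`K' < ∞` with `P(|t(x) - t(y)| > K' |x - y|) ≤ ε` for all `x ≠ y` in `ℤ^d`. -/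
theorem stmt_3
    {Ω : Type*} [MeasurableSpace Ω] (P : Measure Ω) [IsProbabilityMeasure P]
    (d : ℕ) (hd : 1 ≤ d) (p : ℝ) (hp : 1 ≤ p)
    (t σ : (Fin d → ℤ) → Ω → ℝ)
    (ht_meas : ∀ x, Measurable (t x)) (hσ_meas : ∀ x, Measurable (σ x))
    (ht_nonneg : ∀ x ω, 0 ≤ t x ω) (hσ_nonneg : ∀ x ω, 0 ≤ σ x ω)
    -- finite p-th moments
    (ht_int : ∀ x, Integrable (fun ω => t x ω ^ p) P)
    (hσ_int : ∀ x, Integrable (fun ω => σ x ω ^ p) P)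
    -- (i) the renewal bound of Lemma 3.1
    (hrenewal : ∀ x y, ∫ ω in {ω | σ y ω ≤ t x ω}, (t x ω - σ y ω) ^ p ∂P
      ≤ (P {ω | σ y ω ≤ t x ω}).toReal * ∫ ω, t (x - y) ω ^ p ∂P)
    -- (ii) t ≤ σ a.s. and uniform bound on E[(σ - t)^p]
    (htσ : ∀ y, ∀ᵐ ω ∂P, t y ω ≤ σ y ω)
    (K : ℝ) (hK : ∀ y, ∫ ω, (σ y ω - t y ω) ^ p ∂P ≤ K)
    -- (iii) sup_{x ≠ 0} E[t(x)^p] / |x|^p < ∞ (shape theorem, Lemma 3.2)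
    (M : ℝ) (hM : ∀ x : Fin d → ℤ, x ≠ 0 →
      (∫ ω, t x ω ^ p ∂P) / (onorm x : ℝ) ^ p ≤ M) :
    ∀ ε : ℝ, 0 < ε → ∃ K' : ℝ, ∀ x y : Fin d → ℤ, x ≠ y →
      (P {ω | K' * (onorm (x - y) : ℝ) < |t x ω - t y ω|}).toReal ≤ ε := by
  intro ε hε
  have hp0 : (0:ℝ) < p := lt_of_lt_of_le one_pos hp
  set M0 : ℝ := max M 0 with hM0def
  set K0 : ℝ := max K 0 with hK0def
  set Cp : ℝ := 4 ^ p * (2 * M0 + 2 * K0) + 1 with hCpdef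
  have hCp : 0 < Cp := by
    have h4 : (0:ℝ) ≤ (4:ℝ) ^ p := Real.rpow_nonneg (by norm_num) p
    have : (0:ℝ) ≤ 2 * M0 + 2 * K0 := by positivity
    nlinarith
  set D : ℝ := Cp / ε with hDdef
  have hD : 0 < D := div_pos hCp hε
  refine ⟨D ^ (1/p), ?_⟩
  intro x y hxy
  set N : ℝ := (onorm (x - y) : ℝ) with hNdef
  have hxy0 : x - y ≠ 0 := sub_ne_zero.mpr hxy
  have hN1 : (1:ℝ) ≤ N := by rw [hNdef]; exact_mod_cast onorm_pos' hxy0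
  have hN0 : 0 < N := lt_of_lt_of_le one_pos hN1
  have hNp1 : (1:ℝ) ≤ N ^ p := Real.one_le_rpow hN1 hp0.le
  have hNp0 : (0:ℝ) < N ^ p := lt_of_lt_of_le one_pos hNp1
  -- moment bound for t(z)^p, z ≠ 0 with onorm z = onorm (x - y)
  have hmom : ∀ z : Fin d → ℤ, z ≠ 0 → (onorm z : ℝ) = N →
      ∫ ω, t z ω ^ p ∂P ≤ M0 * N ^ p := by
    intro z hz hzn
    have h := hM z hz
    rw [hzn] at h
    have := (div_le_iff₀ hNp0).mp h
    calc ∫ ω, t z ω ^ p ∂P ≤ M * N ^ p := this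
      _ ≤ M0 * N ^ p := by
          apply mul_le_mul_of_nonneg_right (le_max_left M 0) hNp0.le
  -- positive-part integrals
  have hplus : ∀ u v : Fin d → ℤ, u - v ≠ 0 → ((onorm (u - v) : ℝ)) = N →
      ∫ ω, (max (t u ω - σ v ω) 0) ^ p ∂P ≤ M0 * N ^ p := by
    intro u v huv hun
    have hset : MeasurableSet {ω | σ v ω ≤ t u ω} :=
      measurableSet_le (hσ_meas v) (ht_meas u)
    have hI : ∫ ω, (max (t u ω - σ v ω) 0) ^ p ∂P
        = ∫ ω in {ω | σ v ω ≤ t u ω}, (t u ω - σ v ω) ^ p ∂P := by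
      rw [← integral_indicator hset]
      congr 1
      funext ω
      simp only [Set.indicator_apply, Set.mem_setOf_eq]
      split_ifs with h
      · rw [max_eq_left (sub_nonneg.mpr h)]
      · rw [max_eq_right (by push_neg at h; linarith), Real.zero_rpow hp0.ne']
    rw [hI]
    have hmeas1 : (P {ω | σ v ω ≤ t u ω}).toReal ≤ 1 := by
      simpa using ENNReal.toReal_mono ENNReal.one_ne_top prob_le_one
    have hInn : 0 ≤ ∫ ω, t (u - v) ω ^ p ∂P :=
      integral_nonneg fun ω => Real.rpow_nonneg (ht_nonneg _ ω) p
    calc ∫ ω in {ω | σ v ω ≤ t u ω}, (t u ω - σ v ω) ^ p ∂P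
        ≤ (P {ω | σ v ω ≤ t u ω}).toReal * ∫ ω, t (u - v) ω ^ p ∂P := hrenewal u v
      _ ≤ 1 * ∫ ω, t (u - v) ω ^ p ∂P := mul_le_mul_of_nonneg_right hmeas1 hInn
      _ = ∫ ω, t (u - v) ω ^ p ∂P := one_mul _
      _ ≤ M0 * N ^ p := hmom (u - v) huv hun
  -- diff integrals
  have hdiff : ∀ v : Fin d → ℤ, ∫ ω, (σ v ω - t v ω) ^ p ∂P ≤ K0 := fun v =>
    le_trans (hK v) (le_max_left K 0)
  -- integrability of the four pieces and of f
  have hrpm : ∀ f : Ω → ℝ, Measurable f → Measurable fun ω => f ω ^ p := fun f hf =>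
    (Real.continuous_rpow_const hp0.le).measurable.comp hf
  have hg1_int : ∀ u v : Fin d → ℤ, Integrable (fun ω => (max (t u ω - σ v ω) 0) ^ p) P := by
    intro u v
    refine (ht_int u).mono' ?_ ?_
    · exact (hrpm _ (((ht_meas u).sub (hσ_meas v)).max measurable_const)).aestronglyMeasurable
    · filter_upwards with ω
      rw [Real.norm_of_nonneg (Real.rpow_nonneg (le_max_right _ _) p)]
      exact Real.rpow_le_rpow (le_max_right _ _)
        (max_le (by have := hσ_nonneg v ω; linarith) (ht_nonneg u ω)) hp0.le
  have hg2_int : ∀ v : Fin d → ℤ, Integrable (fun ω => (σ v ω - t v ω) ^ p) P := by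
    intro v
    refine (hσ_int v).mono' ?_ ?_
    · exact (hrpm _ ((hσ_meas v).sub (ht_meas v))).aestronglyMeasurable
    · filter_upwards [htσ v] with ω hω
      rw [Real.norm_of_nonneg (Real.rpow_nonneg (by linarith) p)]
      exact Real.rpow_le_rpow (by linarith) (by have := ht_nonneg v ω; linarith) hp0.le
  set f : Ω → ℝ := fun ω => |t x ω - t y ω| ^ p with hfdef
  have hf_meas : Measurable f := hrpm _ ((ht_meas x).sub (ht_meas y)).abs
  have hf_nonneg : ∀ ω, 0 ≤ f ω := fun ω => Real.rpow_nonneg (abs_nonneg _) p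
  -- pointwise a.e. bound
  set g : Ω → ℝ := fun ω => 4 ^ p * ((max (t x ω - σ y ω) 0) ^ p + (σ y ω - t y ω) ^ p
    + (max (t y ω - σ x ω) 0) ^ p + (σ x ω - t x ω) ^ p) with hgdef
  have hg_int : Integrable g P := by
    exact ((((hg1_int x y).add (hg2_int y)).add (hg1_int y x)).add (hg2_int x)).const_mul _
  have hfg : ∀ᵐ ω ∂P, f ω ≤ g ω := by
    filter_upwards [htσ x, htσ y] with ω hx hy
    have ha : 0 ≤ max (t x ω - σ y ω) 0 := le_max_right _ _
    have hb : 0 ≤ σ y ω - t y ω := by linarith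
    have hc : 0 ≤ max (t y ω - σ x ω) 0 := le_max_right _ _
    have he : 0 ≤ σ x ω - t x ω := by linarith
    have habs : |t x ω - t y ω| ≤ max (t x ω - σ y ω) 0 + (σ y ω - t y ω)
        + max (t y ω - σ x ω) 0 + (σ x ω - t x ω) := by
      have h1 : t x ω - σ y ω ≤ max (t x ω - σ y ω) 0 := le_max_left _ _
      have h2 : t y ω - σ x ω ≤ max (t y ω - σ x ω) 0 := le_max_left _ _
      rw [abs_le]
      constructor <;> linarith
    calc f ω = |t x ω - t y ω| ^ p := rfl
      _ ≤ (max (t x ω - σ y ω) 0 + (σ y ω - t y ω)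
          + max (t y ω - σ x ω) 0 + (σ x ω - t x ω)) ^ p :=
        Real.rpow_le_rpow (abs_nonneg _) habs hp0.le
      _ ≤ 4 ^ p * ((max (t x ω - σ y ω) 0) ^ p + (σ y ω - t y ω) ^ p
          + (max (t y ω - σ x ω) 0) ^ p + (σ x ω - t x ω) ^ p) :=
        aux_sum4 hp ha hb hc he
      _ = g ω := rfl
  have hf_int : Integrable f P := hg_int.mono' hf_meas.aestronglyMeasurable
    (by filter_upwards [hfg] with ω hω; rw [Real.norm_of_nonneg (hf_nonneg ω)]; exact hω)
  -- integral bound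
  have hyx0 : y - x ≠ 0 := fun h => hxy (sub_eq_zero.mp h).symm
  have hyxn : ((onorm (y - x) : ℝ)) = N := by
    rw [hNdef]
    congr 1
    rw [show y - x = -(x - y) by ring, onorm_neg']
  have hIf : ∫ ω, f ω ∂P ≤ Cp * N ^ p := by
    have h4 : (0:ℝ) ≤ (4:ℝ) ^ p := Real.rpow_nonneg (by norm_num) p
    have hIg : ∫ ω, g ω ∂P ≤ 4 ^ p * (2 * M0 * N ^ p + 2 * K0) := by
      have e1 := hplus x y hxy0 rfl
      have e2 := hdiff y
      have e3 := hplus y x hyx0 hyxn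
      have e4 := hdiff x
      have hsum : ∫ ω, g ω ∂P = 4 ^ p * (∫ ω, (max (t x ω - σ y ω) 0) ^ p ∂P
          + ∫ ω, (σ y ω - t y ω) ^ p ∂P + ∫ ω, (max (t y ω - σ x ω) 0) ^ p ∂P
          + ∫ ω, (σ x ω - t x ω) ^ p ∂P) := by
        have i1 : Integrable (fun ω => (max (t x ω - σ y ω) 0) ^ p) P := hg1_int x y
        have i12 : Integrable (fun ω => (max (t x ω - σ y ω) 0) ^ p
            + (σ y ω - t y ω) ^ p) P := i1.add (hg2_int y)
        have i123 : Integrable (fun ω => (max (t x ω - σ y ω) 0) ^ p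
            + (σ y ω - t y ω) ^ p + (max (t y ω - σ x ω) 0) ^ p) P := i12.add (hg1_int y x)
        simp only [hgdef]
        rw [integral_const_mul]
        congr 1
        rw [integral_add i123 (hg2_int x), integral_add i12 (hg1_int y x),
          integral_add i1 (hg2_int y)]
      rw [hsum]
      nlinarith
    have hK0 : 0 ≤ K0 := le_max_right K 0
    have hM00 : 0 ≤ M0 := le_max_right M 0
    have hKN : 2 * K0 ≤ 2 * K0 * N ^ p := by nlinarith
    calc ∫ ω, f ω ∂P ≤ ∫ ω, g ω ∂P := integral_mono_ae hf_int hg_int hfg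
      _ ≤ 4 ^ p * (2 * M0 * N ^ p + 2 * K0) := hIg
      _ ≤ 4 ^ p * ((2 * M0 + 2 * K0) * N ^ p) := by nlinarith
      _ ≤ Cp * N ^ p := by rw [hCpdef]; nlinarith
  -- Markov
  set c : ℝ := D ^ (1/p) * N with hcdef
  have hc0 : 0 ≤ c := mul_nonneg (Real.rpow_nonneg hD.le _) hN0.le
  have hcp : c ^ p = D * N ^ p := by
    rw [hcdef, Real.mul_rpow (Real.rpow_nonneg hD.le _) hN0.le]
    congr 1
    rw [← Real.rpow_mul hD.le, one_div_mul_cancel hp0.ne', Real.rpow_one]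
  have hmarkov := mul_meas_ge_le_integral_of_nonneg
    (ae_of_all P hf_nonneg) hf_int (c ^ p)
  have hsub : {ω | D ^ (1/p) * N < |t x ω - t y ω|} ⊆ {ω | c ^ p ≤ f ω} := by
    intro ω hω
    exact Real.rpow_le_rpow hc0 (le_of_lt hω) hp0.le
  have hTle : (P {ω | D ^ (1/p) * N < |t x ω - t y ω|}).toReal
      ≤ (P {ω | c ^ p ≤ f ω}).toReal :=
    ENNReal.toReal_mono (measure_ne_top P _) (measure_mono hsub)
  set T : ℝ := (P {ω | c ^ p ≤ f ω}).toReal with hTdef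
  have hT0 : 0 ≤ T := ENNReal.toReal_nonneg
  have hkey : D * N ^ p * T ≤ Cp * N ^ p := by
    calc D * N ^ p * T = c ^ p * T := by rw [hcp]
      _ ≤ ∫ ω, f ω ∂P := hmarkov
      _ ≤ Cp * N ^ p := hIf
  have hCpe : Cp = D * ε := by rw [hDdef]; field_simp
  have hTe : T ≤ ε := by
    rw [hCpe] at hkey
    nlinarith [mul_pos hD hNp0]
  exact le_trans hTle hTe
end

section
/- Let (Ω, F, P) be a probability space satisfying the hypotheses below. Then for every ε > 0 there exists R such that for all x ∈ ℤ^d with |x| ≥ R, limsup_{n → ∞} P( t(nx) ≤ t((n+1)x) ) > 1 − ε. (This is equation (5) of the paper, the limsup consequence of Theorem 1.1, stated with all properties of the contact process hitting times that the proof uses carried as explicit hypotheses.) -/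
open MeasureTheory Filter Finset

/-!
With `a n = E[t(n x)]` and `p n = P(t(n x) ≤ t((n+1) x))`, the renewal bound and the bound on
`E[σ - t]` give `a (n+1) ≤ a n + p n * E[t(x)] + C₁`. Since `a n / n → μ(x)`, this forces
`μ(x) ≤ limsup p * E[t(x)] + C₁`, i.e. `limsup p ≥ (μ(x) - C₁) / E[t(x)]`, and the shape theorem
makes the right-hand side tend to `1` as `|x| → ∞`.
-/

theorem le_of_tendsto_div_of_eventually_le_add {a : ℕ → ℝ} {m L : ℝ}
    (hlim : Tendsto (fun n : ℕ => a n / n) atTop (nhds m))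
    (hstep : ∀ᶠ n in atTop, a (n + 1) ≤ a n + L) : m ≤ L := by
  obtain ⟨N, hN⟩ := eventually_atTop.1 hstep
  set c := a N - N * L
  have hlin : ∀ n ≥ N, a n ≤ c + n * L := by
    intro n hn
    induction n, hn using Nat.le_induction with
    | base => simp [c]
    | succ n hn ih => push_cast; linarith [hN n hn]
  have hbound : Tendsto (fun n : ℕ => c / n + L) atTop (nhds L) := by
    simpa using (tendsto_const_div_atTop_nhds_zero_nat c).add_const L
  refine le_of_tendsto_of_tendsto hlim hbound ?_
  filter_upwards [eventually_ge_atTop (max N 1)] with n hn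
  have hn0 : (0 : ℝ) < n := by exact_mod_cast (le_of_max_le_right hn)
  calc a n / n ≤ (c + n * L) / n :=
        (div_le_div_iff_of_pos_right hn0).2 (hlin n (le_of_max_le_left hn))
    _ = c / n + L := by field_simp

theorem le_limsup_of_tendsto_div {a b : ℕ → ℝ} {m : ℝ}
    (hlim : Tendsto (fun n : ℕ => a n / n) atTop (nhds m))
    (hstep : ∀ n, a (n + 1) ≤ a n + b n) (hb : IsBoundedUnder (· ≤ ·) atTop b) :
    m ≤ limsup b atTop :=
  le_of_forall_gt_imp_ge_of_dense fun _ hL =>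
    le_of_tendsto_div_of_eventually_le_add hlim <|
      (eventually_lt_of_limsup_lt hL hb).mono fun n hn => (hstep n).trans (by linarith)

theorem le_limsup_mul_add_of_tendsto_div {a p : ℕ → ℝ} {m E C : ℝ}
    (hlim : Tendsto (fun n : ℕ => a n / n) atTop (nhds m))
    (hstep : ∀ n, a (n + 1) ≤ a n + p n * E + C) (hE : 0 ≤ E)
    (hp_le : IsBoundedUnder (· ≤ ·) atTop p) (hp_ge : IsBoundedUnder (· ≥ ·) atTop p) :
    m ≤ limsup p atTop * E + C := by
  have hmono : Monotone fun s : ℝ => s * E + C := fun _ _ h => by dsimp only; gcongr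
  rw [hmono.map_limsup_of_continuousAt p (by fun_prop) hp_le hp_ge.isCoboundedUnder_le]
  exact le_limsup_of_tendsto_div hlim (fun n => (hstep n).trans_eq (add_assoc _ _ _))
    (hmono.isBoundedUnder_le_comp hp_le)

theorem integral_le_setIntegral_of_nonpos_compl {α : Type*} [MeasurableSpace α] {μ : Measure α}
    {f : α → ℝ} {s : Set α} (hs : NullMeasurableSet s μ) (hf : Integrable f μ)
    (hfs : ∀ x ∉ s, f x ≤ 0) : ∫ x, f x ∂μ ≤ ∫ x in s, f x ∂μ := by
  have hcompl : ∫ x in sᶜ, f x ∂μ ≤ 0 :=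
    integral_nonpos_of_ae <| (ae_restrict_mem₀ hs.compl).mono fun x hx => hfs x hx
  linarith [integral_add_compl₀ hs hf]

section Renewal

variable {Ω ι : Type*} [MeasurableSpace Ω] {P : Measure Ω} [IsFiniteMeasure P] [Sub ι]
  {t σ : ι → Ω → ℝ} {C₁ : ℝ}

theorem integral_le_of_renewal
    (ht_nonneg : ∀ x ω, 0 ≤ t x ω)
    (ht_int : ∀ x, Integrable (t x) P) (hσ_int : ∀ x, Integrable (σ x) P)
    (hrenewal : ∀ x y, ∫ ω in {ω | σ y ω ≤ t x ω}, (t x ω - σ y ω) ∂P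
      ≤ (P {ω | σ y ω ≤ t x ω}).toReal * ∫ ω, t (x - y) ω ∂P)
    (htσ : ∀ y, ∀ᵐ ω ∂P, t y ω ≤ σ y ω)
    (hC₁ : ∀ y, ∫ ω, (σ y ω - t y ω) ∂P ≤ C₁) (y z : ι) :
    ∫ ω, t z ω ∂P ≤ ∫ ω, t y ω ∂P
      + (P {ω | t y ω ≤ t z ω}).toReal * ∫ ω, t (z - y) ω ∂P + C₁ := by
  set A := {ω | σ y ω ≤ t z ω}
  have hA : NullMeasurableSet A P :=
    nullMeasurableSet_le (hσ_int y).aemeasurable (ht_int z).aemeasurable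
  have hgap : ∫ ω, (t z ω - σ y ω) ∂P ≤ ∫ ω in A, (t z ω - σ y ω) ∂P :=
    integral_le_setIntegral_of_nonpos_compl hA ((ht_int z).sub (hσ_int y))
      fun ω hω => by simp only [A, Set.mem_ofPred_eq, not_le] at hω; linarith
  have hAB : (P A).toReal ≤ (P {ω | t y ω ≤ t z ω}).toReal :=
    ENNReal.toReal_mono (measure_ne_top P _) <| measure_mono_ae <| by
      filter_upwards [htσ y] with ω hty hA
      exact hty.trans hA
  have hprob := mul_le_mul_of_nonneg_right hAB (integral_nonneg (μ := P) (ht_nonneg (z - y)))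
  have hσ_le := hC₁ y
  rw [integral_sub (hσ_int y) (ht_int y)] at hσ_le
  rw [integral_sub (ht_int z) (hσ_int y)] at hgap
  linarith [hrenewal z y]

end Renewal

theorem exists_forall_le_onorm_of_eventually_cofinite {d : ℕ} {q : (Fin d → ℤ) → Prop}
    (h : ∀ᶠ x in cofinite, q x) : ∃ R : ℕ, ∀ x, R ≤ onorm x → q x := by
  rw [eventually_cofinite] at h
  refine ⟨h.toFinset.sup onorm + 1, fun x hx => by_contra fun hqx => ?_⟩
  have := Finset.le_sup (f := onorm) (h.mem_toFinset.2 hqx)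
  omega

theorem stmt_10_general
    {Ω : Type*} [MeasurableSpace Ω] (P : Measure Ω) [IsProbabilityMeasure P]
    (d : ℕ)
    (t σ : (Fin d → ℤ) → Ω → ℝ)
    (ht_nonneg : ∀ x ω, 0 ≤ t x ω)
    (ht_int : ∀ x, Integrable (t x) P) (hσ_int : ∀ x, Integrable (σ x) P)
    -- (i) the renewal bound of Lemma 3.1
    (hrenewal : ∀ x y, ∫ ω in {ω | σ y ω ≤ t x ω}, (t x ω - σ y ω) ∂P
      ≤ (P {ω | σ y ω ≤ t x ω}).toReal * ∫ ω, t (x - y) ω ∂P)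
    -- (ii) t ≤ σ a.s. and uniform bound on E[σ - t]
    (htσ : ∀ y, ∀ᵐ ω ∂P, t y ω ≤ σ y ω)
    (C₁ : ℝ) (hC₁ : ∀ y, ∫ ω, (σ y ω - t y ω) ∂P ≤ C₁)
    -- (iii) normalized expected hitting times converge
    (μ : (Fin d → ℤ) → ℝ)
    (hμ : ∀ x, Tendsto (fun n : ℕ => (∫ ω, t (n • x) ω ∂P) / n) atTop (nhds (μ x)))
    -- (iv) the shape theorem (Lemma 3.2)
    (hμ_inf : Tendsto μ cofinite atTop)
    (hshape : Tendsto (fun x => (∫ ω, t x ω ∂P) / μ x) cofinite (nhds 1)) :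
    ∀ ε : ℝ, 0 < ε → ∃ R : ℕ, ∀ x : Fin d → ℤ, R ≤ onorm x →
      1 - ε < limsup (fun n : ℕ =>
        (P {ω | t (n • x) ω ≤ t ((n + 1) • x) ω}).toReal) atTop := by
  intro ε hε
  set E := fun x => ∫ ω, t x ω ∂P
  have hμ_le : ∀ x, μ x ≤ limsup (fun n : ℕ =>
      (P {ω | t (n • x) ω ≤ t ((n + 1) • x) ω}).toReal) atTop * E x + C₁ := fun x =>
    le_limsup_mul_add_of_tendsto_div (hμ x)
      (fun n => by
        have hx : (n + 1) • x - n • x = x := by rw [succ_nsmul, add_sub_cancel_left]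
        have := integral_le_of_renewal ht_nonneg ht_int hσ_int hrenewal htσ hC₁ (n • x) ((n + 1) • x)
        rwa [hx] at this)
      (integral_nonneg (ht_nonneg x))
      (isBoundedUnder_of ⟨1, fun _ => ENNReal.toReal_le_of_le_ofReal zero_le_one
        (by simpa using prob_le_one)⟩)
      (isBoundedUnder_of ⟨0, fun _ => ENNReal.toReal_nonneg⟩)
  have hμ_pos := hμ_inf.eventually_gt_atTop 0
  have hE_pos : ∀ᶠ x in cofinite, 0 < E x := by
    filter_upwards [hshape.eventually (lt_mem_nhds one_pos), hμ_pos] with x hx hμx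
    exact (div_pos_iff_of_pos_right hμx).1 hx
  have hratio : Tendsto (fun x => (μ x - C₁) / E x) cofinite (nhds 1) := by
    have := (tendsto_const_nhds (x := (1 : ℝ)).sub
      (tendsto_const_nhds (x := C₁).div_atTop hμ_inf)).div hshape one_ne_zero
    refine (by simpa using this : Tendsto _ _ _).congr' ?_
    filter_upwards [hμ_pos] with x hμx
    show (1 - C₁ / μ x) / (E x / μ x) = _
    rw [one_sub_div hμx.ne', div_div_div_cancel_right₀ hμx.ne']
  obtain ⟨R, hR⟩ := exists_forall_le_onorm_of_eventually_cofinite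
    ((hratio.eventually (lt_mem_nhds (by linarith : 1 - ε < 1))).and hE_pos)
  refine ⟨R, fun x hx => ?_⟩
  obtain ⟨hlt, hEx⟩ := hR x hx
  exact hlt.trans_le ((div_le_iff₀ hEx).2 (by linarith [hμ_le x]))

/-- First statement of Theorem 1.1 (Uniformity of hitting times):
`lim_{|x|→∞} liminf_{n→∞} (1/n) ∑_{k=1}^n P(t((k-1)x) ≤ t(kx)) = 1`,
the limit in `x` being along the cofinite filter on `ℤ^d`. -/
theorem stmt_10
    {Ω : Type*} [MeasurableSpace Ω] (P : Measure Ω) [IsProbabilityMeasure P]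
    (d : ℕ) (hd : 1 ≤ d)
    (t σ : (Fin d → ℤ) → Ω → ℝ)
    (ht_meas : ∀ x, Measurable (t x)) (hσ_meas : ∀ x, Measurable (σ x))
    (ht_nonneg : ∀ x ω, 0 ≤ t x ω) (hσ_nonneg : ∀ x ω, 0 ≤ σ x ω)
    (ht_int : ∀ x, Integrable (t x) P) (hσ_int : ∀ x, Integrable (σ x) P)
    -- (i) the renewal bound of Lemma 3.1
    (hrenewal : ∀ x y, ∫ ω in {ω | σ y ω ≤ t x ω}, (t x ω - σ y ω) ∂P
      ≤ (P {ω | σ y ω ≤ t x ω}).toReal * ∫ ω, t (x - y) ω ∂P)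
    -- (ii) t ≤ σ a.s. and uniform bound on E[σ - t]
    (htσ : ∀ y, ∀ᵐ ω ∂P, t y ω ≤ σ y ω)
    (C₁ : ℝ) (hC₁ : ∀ y, ∫ ω, (σ y ω - t y ω) ∂P ≤ C₁)
    -- (iii) normalized expected hitting times converge
    (μ : (Fin d → ℤ) → ℝ) (hμ_nonneg : ∀ x, 0 ≤ μ x)
    (hμ : ∀ x, Tendsto (fun n : ℕ => (∫ ω, t (n • x) ω ∂P) / n) atTop (nhds (μ x)))
    -- (iv) the shape theorem (Lemma 3.2)
    (hμ_inf : Tendsto μ cofinite atTop)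
    (hshape : Tendsto (fun x => (∫ ω, t x ω ∂P) / μ x) cofinite (nhds 1)) :
    ∀ ε : ℝ, 0 < ε → ∃ R : ℕ, ∀ x : Fin d → ℤ, R ≤ onorm x →
      1 - ε < limsup (fun n : ℕ =>
        (P {ω | t (n • x) ω ≤ t ((n + 1) • x) ω}).toReal) atTop :=
  stmt_10_general P d t σ ht_nonneg ht_int hσ_int hrenewal htσ C₁ hC₁ μ hμ hμ_inf hshape
end
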